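/- arXiv:2209.12845 — 2 statements merged into one kernel-verified Lean document; each statement's English description precedes it below -/
import Mathlib

section
/- Let r be any real number and let ℓ > −1 be a real number. Then ∫_2^x t^ℓ (log t)^r dt = (1/(ℓ+1)) x^{ℓ+1} (log x)^r + O(x^{ℓ+1} (log x)^{r−1}) as x → ∞. -/
open Filter Real Asymptotics Set

lemma basicCA (p q : ℝ) {t : ℝ} (ht : (2:ℝ) ≤ t) :
    ContinuousAt (fun u : ℝ => u ^ p * Real.log u ^ q) t := by
  have h0 : t ≠ 0 := by intro h; rw [h] at ht; norm_num at ht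
  have hl : Real.log t ≠ 0 := ne_of_gt (Real.log_pos (by linarith))
  exact (Real.continuousAt_rpow_const t p (Or.inl h0)).mul
    ((Real.continuousAt_rpow_const _ q (Or.inl hl)).comp (Real.continuousAt_log h0))

lemma contOnPQ (p q : ℝ) : ContinuousOn (fun t : ℝ => t ^ p * Real.log t ^ q) (Set.Ici 2) :=
  fun _ ht => (basicCA p q ht).continuousWithinAt

lemma intOnPQ (p q : ℝ) {a b : ℝ} (ha : 2 ≤ a) (hb : 2 ≤ b) :
    IntervalIntegrable (fun t : ℝ => t ^ p * Real.log t ^ q) MeasureTheory.volume a b :=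
  ((contOnPQ p q).mono (fun _ hx => le_trans (le_min ha hb) (Set.mem_Icc.mp hx).1)).intervalIntegrable

lemma hasDerivPQ (p q : ℝ) {x : ℝ} (hx : 1 < x) :
    HasDerivAt (fun t : ℝ => t ^ p * Real.log t ^ q)
      (p * x ^ (p-1) * Real.log x ^ q + x ^ p * (q * Real.log x ^ (q-1) * x⁻¹)) x := by
  have h0 : x ≠ 0 := by linarith
  have hl : Real.log x ≠ 0 := ne_of_gt (Real.log_pos hx)
  have h1 : HasDerivAt (fun t : ℝ => t ^ p) (p * x ^ (p-1)) x :=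
    Real.hasDerivAt_rpow_const (Or.inl h0)
  have h2 : HasDerivAt (fun t : ℝ => Real.log t ^ q) (q * Real.log x ^ (q-1) * x⁻¹) x := by
    have := (Real.hasDerivAt_rpow_const (p := q) (Or.inl hl)).comp x (Real.hasDerivAt_log h0)
    simpa [mul_assoc, Function.comp_def] using this
  exact h1.mul h2

lemma contOnD (p q : ℝ) :
    ContinuousOn (fun t : ℝ => p * t ^ (p-1) * Real.log t ^ q
      + t ^ p * (q * Real.log t ^ (q-1) * t⁻¹)) (Set.Ici 2) := by
  intro t ht
  have ht2 : (2:ℝ) ≤ t := ht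
  have h0 : t ≠ 0 := by intro h; rw [h] at ht2; norm_num at ht2
  have hl : Real.log t ≠ 0 := ne_of_gt (Real.log_pos (by linarith))
  have c1 : ContinuousAt (fun u : ℝ => u ^ (p-1)) t :=
    Real.continuousAt_rpow_const t _ (Or.inl h0)
  have c2 : ContinuousAt (fun u : ℝ => Real.log u ^ q) t :=
    (Real.continuousAt_rpow_const _ q (Or.inl hl)).comp (Real.continuousAt_log h0)
  have c3 : ContinuousAt (fun u : ℝ => Real.log u ^ (q-1)) t :=
    (Real.continuousAt_rpow_const _ (q-1) (Or.inl hl)).comp (Real.continuousAt_log h0)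
  have c4 : ContinuousAt (fun u : ℝ => u ^ p) t :=
    Real.continuousAt_rpow_const t _ (Or.inl h0)
  have c5 : ContinuousAt (fun u : ℝ => u⁻¹) t := continuousAt_inv₀ h0
  exact (((continuousAt_const.mul c1).mul c2).add
    (c4.mul ((continuousAt_const.mul c3).mul c5))).continuousWithinAt

lemma intOnD (p q : ℝ) {a b : ℝ} (ha : 2 ≤ a) (hb : 2 ≤ b) :
    IntervalIntegrable (fun t : ℝ => p * t ^ (p-1) * Real.log t ^ q
      + t ^ p * (q * Real.log t ^ (q-1) * t⁻¹)) MeasureTheory.volume a b :=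
  ((contOnD p q).mono (fun _ hx => le_trans (le_min ha hb) (Set.mem_Icc.mp hx).1)).intervalIntegrable

lemma ftcPQ (p q : ℝ) {a b : ℝ} (ha : 2 ≤ a) (hab : a ≤ b) :
    ∫ t in a..b, (p * t ^ (p-1) * Real.log t ^ q
      + t ^ p * (q * Real.log t ^ (q-1) * t⁻¹))
      = b ^ p * Real.log b ^ q - a ^ p * Real.log a ^ q := by
  refine intervalIntegral.integral_eq_sub_of_hasDerivAt
    (f := fun t => t ^ p * Real.log t ^ q) (fun x hx => ?_) (intOnD p q ha (by linarith))
  rw [Set.uIcc_of_le hab] at hx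
  exact hasDerivPQ p q (by have := hx.1; linarith)

lemma ev_one (p q : ℝ) (hp : 0 < p) : ∀ᶠ x : ℝ in atTop, 1 ≤ x ^ p * Real.log x ^ q := by
  have hll : (fun x : ℝ => Real.log (Real.log x)) =o[atTop] Real.log :=
    Real.isLittleO_log_id_atTop.comp_tendsto Real.tendsto_log_atTop
  have hb := hll.bound (show (0:ℝ) < p / (2 * (|q| + 1)) by positivity)
  filter_upwards [hb, eventually_ge_atTop (2:ℝ)] with x hx h2
  have hx1 : (1:ℝ) < x := by linarith
  have hlp : 0 < Real.log x := Real.log_pos hx1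
  have key : 0 ≤ Real.log x * p + Real.log (Real.log x) * q := by
    have h1 : |Real.log (Real.log x)| ≤ p / (2 * (|q| + 1)) * Real.log x := by
      simpa [abs_of_pos hlp] using hx
    have h2' : Real.log (Real.log x) * q ≥ -(|Real.log (Real.log x)| * |q|) := by
      nlinarith [neg_abs_le (Real.log (Real.log x) * q), abs_mul (Real.log (Real.log x)) q]
    have hq : (0:ℝ) ≤ |q| := abs_nonneg q
    have hc : p / (2 * (|q| + 1)) * |q| ≤ p / 2 := by
      rw [div_mul_eq_mul_div, div_le_div_iff₀ (by positivity) (by norm_num)]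
      nlinarith
    nlinarith [abs_nonneg (Real.log (Real.log x))]
  rw [Real.rpow_def_of_pos (by linarith : (0:ℝ) < x),
      Real.rpow_def_of_pos hlp, ← Real.exp_add]
  calc (1:ℝ) = Real.exp 0 := Real.exp_zero.symm
    _ ≤ _ := Real.exp_le_exp.mpr key

lemma intA (ℓ s : ℝ) (hℓ : -1 < ℓ) :
    (fun x : ℝ => ∫ t in (2:ℝ)..x, t ^ ℓ * Real.log t ^ s) =O[atTop]
      fun x : ℝ => x ^ (ℓ + 1) * Real.log x ^ s := by
  have hℓ1 : (0:ℝ) < ℓ + 1 := by linarith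
  set c : ℝ := 2 * |s| / (ℓ + 1) with hc
  set x₀ : ℝ := max 2 (Real.exp c) with hx₀
  have hx₀2 : (2:ℝ) ≤ x₀ := le_max_left _ _
  have hlogx₀ : c ≤ Real.log x₀ := by
    calc c = Real.log (Real.exp c) := (Real.log_exp c).symm
      _ ≤ Real.log x₀ := Real.log_le_log (Real.exp_pos c) (le_max_right _ _)
  set C : ℝ := ∫ t in (2:ℝ)..x₀, t ^ ℓ * Real.log t ^ s with hC
  have hCnn : 0 ≤ C := by
    refine intervalIntegral.integral_nonneg hx₀2 (fun u hu => ?_)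
    have h2u : (2:ℝ) ≤ u := hu.1
    exact mul_nonneg (Real.rpow_nonneg (by linarith) _)
      (Real.rpow_nonneg (Real.log_nonneg (by linarith)) _)
  rw [isBigO_iff]
  refine ⟨C + 2 / (ℓ + 1), ?_⟩
  filter_upwards [eventually_ge_atTop x₀, ev_one (ℓ+1) s hℓ1] with x hx hone
  have hx2 : (2:ℝ) ≤ x := le_trans hx₀2 hx
  -- split the integral
  have hsplit : (∫ t in (2:ℝ)..x, t ^ ℓ * Real.log t ^ s)
      = C + ∫ t in x₀..x, t ^ ℓ * Real.log t ^ s := by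
    rw [hC, intervalIntegral.integral_add_adjacent_intervals (intOnPQ ℓ s le_rfl hx₀2)
      (intOnPQ ℓ s hx₀2 hx2)]
  -- pointwise bound on [x₀, x]
  have hpt : ∀ t ∈ Set.Icc x₀ x, t ^ ℓ * Real.log t ^ s
      ≤ (2/(ℓ+1)) * ((ℓ+1) * t ^ ((ℓ+1)-1) * Real.log t ^ s
        + t ^ (ℓ+1) * (s * Real.log t ^ (s-1) * t⁻¹)) := by
    intro t ht
    have ht2 : (2:ℝ) ≤ t := le_trans hx₀2 ht.1
    have ht0 : (0:ℝ) < t := by linarith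
    have hlt : 0 < Real.log t := Real.log_pos (by linarith)
    have hlogt : c ≤ Real.log t := le_trans hlogx₀
      (Real.log_le_log (by linarith) ht.1)
    have e1 : t ^ (ℓ+1) * t⁻¹ = t ^ ℓ := by
      rw [Real.rpow_add_one (ne_of_gt ht0)]
      field_simp
    have e2 : Real.log t ^ s = Real.log t ^ (s-1) * Real.log t := by
      rw [← Real.rpow_add_one (ne_of_gt hlt) (s-1)]
      norm_num
    have e3 : t ^ ((ℓ+1)-1) = t ^ ℓ := by norm_num
    rw [e3]
    have expand : (2/(ℓ+1)) * ((ℓ+1) * t ^ ℓ * Real.log t ^ s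
        + t ^ (ℓ+1) * (s * Real.log t ^ (s-1) * t⁻¹))
        = 2 * (t ^ ℓ * Real.log t ^ s) + (2*s/(ℓ+1)) * (t ^ ℓ * Real.log t ^ (s-1)) := by
      have : t ^ (ℓ+1) * (s * Real.log t ^ (s-1) * t⁻¹)
          = s * (t ^ ℓ * Real.log t ^ (s-1)) := by
        rw [show t ^ (ℓ+1) * (s * Real.log t ^ (s-1) * t⁻¹)
            = (t ^ (ℓ+1) * t⁻¹) * (s * Real.log t ^ (s-1)) by ring, e1]; ring
      rw [this]; field_simp
    rw [expand, e2]
    have hpow : (0:ℝ) ≤ t ^ ℓ := Real.rpow_nonneg (le_of_lt ht0) ℓ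
    have hlpow : (0:ℝ) ≤ Real.log t ^ (s-1) := Real.rpow_nonneg (le_of_lt hlt) (s-1)
    have habs : -(2*s/(ℓ+1)) ≤ c := by
      rw [hc, ← neg_div]
      gcongr
      nlinarith [neg_abs_le s]
    nlinarith [mul_nonneg hpow hlpow, mul_nonneg (mul_nonneg hpow hlpow) (sub_nonneg.mpr (le_trans habs hlogt))]
  have hFnn : 0 ≤ ∫ t in (2:ℝ)..x, t ^ ℓ * Real.log t ^ s := by
    refine intervalIntegral.integral_nonneg hx2 (fun u hu => ?_)
    have h2u : (2:ℝ) ≤ u := hu.1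
    exact mul_nonneg (Real.rpow_nonneg (by linarith) _)
      (Real.rpow_nonneg (Real.log_nonneg (by linarith)) _)
  have hmono : (∫ t in x₀..x, t ^ ℓ * Real.log t ^ s)
      ≤ ∫ t in x₀..x, (2/(ℓ+1)) * ((ℓ+1) * t ^ ((ℓ+1)-1) * Real.log t ^ s
        + t ^ (ℓ+1) * (s * Real.log t ^ (s-1) * t⁻¹)) :=
    intervalIntegral.integral_mono_on hx (intOnPQ ℓ s hx₀2 hx2)
      ((intOnD (ℓ+1) s hx₀2 hx2).const_mul _) hpt
  have hD : (∫ t in x₀..x, (2/(ℓ+1)) * ((ℓ+1) * t ^ ((ℓ+1)-1) * Real.log t ^ s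
        + t ^ (ℓ+1) * (s * Real.log t ^ (s-1) * t⁻¹)))
      = (2/(ℓ+1)) * (x ^ (ℓ+1) * Real.log x ^ s - x₀ ^ (ℓ+1) * Real.log x₀ ^ s) := by
    rw [intervalIntegral.integral_const_mul, ftcPQ (ℓ+1) s hx₀2 hx]
  have hhx₀ : 0 ≤ x₀ ^ (ℓ+1) * Real.log x₀ ^ s :=
    mul_nonneg (Real.rpow_nonneg (by linarith) _)
      (Real.rpow_nonneg (Real.log_nonneg (by linarith)) _)
  rw [Real.norm_eq_abs, Real.norm_eq_abs, abs_of_nonneg hFnn,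
    abs_of_nonneg (by linarith : (0:ℝ) ≤ x ^ (ℓ+1) * Real.log x ^ s)]
  rw [hsplit]
  rw [hD] at hmono
  nlinarith [mul_le_mul_of_nonneg_left hone hCnn, div_nonneg (by norm_num : (0:ℝ) ≤ 2) (le_of_lt hℓ1)]

theorem stmt7 (r ℓ : ℝ) (hℓ : -1 < ℓ) :
    (fun x : ℝ => (∫ t in (2:ℝ)..x, t ^ ℓ * Real.log t ^ r) -
        (1 / (ℓ + 1)) * x ^ (ℓ + 1) * Real.log x ^ r) =O[atTop]
      fun x : ℝ => x ^ (ℓ + 1) * Real.log x ^ (r - 1) := by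
  have hℓ1 : (0:ℝ) < ℓ + 1 := by linarith
  set K : ℝ := (2:ℝ) ^ (ℓ+1) * Real.log 2 ^ r with hK
  have hint : ∀ x : ℝ, 2 ≤ x →
      (∫ t in (2:ℝ)..x, t ^ ℓ * Real.log t ^ r) - 1/(ℓ+1) * x ^ (ℓ+1) * Real.log x ^ r
      = -K/(ℓ+1) - (r/(ℓ+1)) * ∫ t in (2:ℝ)..x, t ^ ℓ * Real.log t ^ (r-1) := by
    intro x hx2
    have hftc := ftcPQ (ℓ+1) r (le_refl (2:ℝ)) hx2
    have hcongr : (∫ t in (2:ℝ)..x, ((ℓ+1) * t ^ ((ℓ+1)-1) * Real.log t ^ r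
        + t ^ (ℓ+1) * (r * Real.log t ^ (r-1) * t⁻¹)))
        = ∫ t in (2:ℝ)..x, ((ℓ+1) * (t ^ ℓ * Real.log t ^ r)
          + r * (t ^ ℓ * Real.log t ^ (r-1))) := by
      refine intervalIntegral.integral_congr (fun t ht => ?_)
      rw [Set.uIcc_of_le hx2] at ht
      have ht2 : (2:ℝ) ≤ t := ht.1
      have ht0 : (0:ℝ) < t := by linarith
      have e1 : t ^ (ℓ+1) * t⁻¹ = t ^ ℓ := by
        rw [Real.rpow_add_one (ne_of_gt ht0)]; field_simp
      have e3 : t ^ ((ℓ+1)-1) = t ^ ℓ := by norm_num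
      rw [e3, show t ^ (ℓ+1) * (r * Real.log t ^ (r-1) * t⁻¹)
          = (t ^ (ℓ+1) * t⁻¹) * (r * Real.log t ^ (r-1)) by ring, e1]
      ring
    have hadd : (∫ t in (2:ℝ)..x, ((ℓ+1) * (t ^ ℓ * Real.log t ^ r)
        + r * (t ^ ℓ * Real.log t ^ (r-1))))
        = (ℓ+1) * (∫ t in (2:ℝ)..x, t ^ ℓ * Real.log t ^ r)
          + r * ∫ t in (2:ℝ)..x, t ^ ℓ * Real.log t ^ (r-1) := by
      rw [intervalIntegral.integral_add ((intOnPQ ℓ r le_rfl hx2).const_mul _)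
        ((intOnPQ ℓ (r-1) le_rfl hx2).const_mul _),
        intervalIntegral.integral_const_mul, intervalIntegral.integral_const_mul]
    rw [hcongr, hadd] at hftc
    field_simp
    linear_combination hftc
  have hconst : (fun _ : ℝ => -K/(ℓ+1)) =O[atTop]
      fun x : ℝ => x ^ (ℓ + 1) * Real.log x ^ (r - 1) := by
    rw [isBigO_iff]
    refine ⟨|(-K/(ℓ+1))|, ?_⟩
    filter_upwards [ev_one (ℓ+1) (r-1) hℓ1] with x hone
    rw [Real.norm_eq_abs, Real.norm_eq_abs]
    nlinarith [abs_nonneg (-K/(ℓ+1)), le_abs_self (x ^ (ℓ+1) * Real.log x ^ (r-1))]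
  have hO : (fun x : ℝ => -K/(ℓ+1) - (r/(ℓ+1)) * ∫ t in (2:ℝ)..x, t ^ ℓ * Real.log t ^ (r-1))
      =O[atTop] fun x : ℝ => x ^ (ℓ + 1) * Real.log x ^ (r - 1) :=
    hconst.sub ((intA ℓ (r-1) hℓ).const_mul_left (r/(ℓ+1)))
  refine hO.congr' ?_ EventuallyEq.rfl
  filter_upwards [eventually_ge_atTop (2:ℝ)] with x hx
  rw [← hint x hx]
end

section
/- Let k > −1 be a real number with k ≠ 0. Then ∫_1^x π_k(t)/t^{k+2} dt = (1/(k+1)) log log x + B/(k+1) + o(1) as x → ∞, where B is the Mertens constant, i.e. the constant such that Σ_{p ≤ x} 1/p = log log x + B + o(1). -/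
open Filter Real

/-- `pik k x = ∑_{p ≤ x, p prime} p^k`. In particular `pik 0` is the prime counting function. -/
noncomputable def pik (k x : ℝ) : ℝ :=
  ∑ p ∈ Finset.filter Nat.Prime (Finset.range (⌊x⌋₊ + 1)), (p : ℝ) ^ k

namespace Stmt19Aux

noncomputable def Sfun (x : ℝ) : ℝ :=
  ∑ p ∈ Finset.filter Nat.Prime (Finset.range (⌊x⌋₊ + 1)), (1 : ℝ) / p

lemma mem_P {x : ℝ} (hx : 0 ≤ x) {p : ℕ} :
    p ∈ Finset.filter Nat.Prime (Finset.range (⌊x⌋₊ + 1)) ↔ p.Prime ∧ (p : ℝ) ≤ x := by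
  simp [Finset.mem_filter, Finset.mem_range, Nat.lt_succ_iff, Nat.le_floor_iff hx, and_comm]

lemma pik_nonneg (k x : ℝ) : 0 ≤ pik k x := by
  apply Finset.sum_nonneg
  intro p _
  exact Real.rpow_nonneg (Nat.cast_nonneg p) k

lemma integrable_piece {k c x A : ℝ} (hx : 1 ≤ x) :
    IntervalIntegrable (fun t => if c ≤ t then A / t ^ (k + 2) else 0)
      MeasureTheory.volume 1 x := by
  have hfun : (fun t : ℝ => if c ≤ t then A / t ^ (k + 2) else 0)
      = Set.indicator (Set.Ici c) (fun t => A / t ^ (k + 2)) := by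
    funext t
    simp [Set.indicator_apply, Set.mem_Ici]
  rw [hfun, intervalIntegrable_iff_integrableOn_Ioc_of_le hx]
  have hbase : MeasureTheory.IntegrableOn (fun t : ℝ => A / t ^ (k + 2))
      (Set.Ioc (1 : ℝ) x) := by
    apply (ContinuousOn.integrableOn_Icc ?_).mono_set Set.Ioc_subset_Icc_self
    apply ContinuousOn.div continuousOn_const
    · apply ContinuousOn.rpow_const continuousOn_id
      intro t ht
      left
      have : (1 : ℝ) ≤ t := ht.1
      simp only [id]
      linarith
    · intro t ht
      have : (1 : ℝ) ≤ t := ht.1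
      exact ne_of_gt (Real.rpow_pos_of_pos (by linarith) _)
  exact hbase.indicator measurableSet_Ici

lemma integral_piece {k : ℝ} (hk : -1 < k) {c x : ℝ} (hc1 : 1 ≤ c) (hcx : c ≤ x) (A : ℝ) :
    ∫ t in (1:ℝ)..x, (if c ≤ t then A / t ^ (k + 2) else 0)
      = A * ((x ^ (-(k + 1)) - c ^ (-(k + 1))) / (-(k + 1))) := by
  have hx : (1 : ℝ) ≤ x := le_trans hc1 hcx
  have hsplit := intervalIntegral.integral_add_adjacent_intervals
    (f := fun t => if c ≤ t then A / t ^ (k + 2) else 0) (μ := MeasureTheory.volume)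
    (a := 1) (b := c) (c := x)
    ((integrable_piece hx).mono_set (by
      rw [Set.uIcc_of_le hc1, Set.uIcc_of_le hx]
      exact Set.Icc_subset_Icc le_rfl hcx))
    ((integrable_piece hx).mono_set (by
      rw [Set.uIcc_of_le hcx, Set.uIcc_of_le hx]
      exact Set.Icc_subset_Icc hc1 le_rfl))
  have h1 : (∫ t in (1:ℝ)..c, (if c ≤ t then A / t ^ (k + 2) else 0)) = 0 := by
    have hc : ∀ᵐ t : ℝ, t ≠ c := by
      have hm : MeasureTheory.volume ({c} : Set ℝ) = 0 := MeasureTheory.measure_singleton c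
      filter_upwards [MeasureTheory.measure_eq_zero_iff_ae_notMem.mp hm] with t ht
      simpa using ht
    have h0 : (∫ t in (1:ℝ)..c, (if c ≤ t then A / t ^ (k + 2) else 0))
        = ∫ t in (1:ℝ)..c, (0:ℝ) := by
      apply intervalIntegral.integral_congr_ae
      filter_upwards [hc] with t ht hmem
      rw [Set.uIoc_of_le hc1] at hmem
      have : ¬ c ≤ t := by
        rcases lt_or_eq_of_le hmem.2 with h | h
        · exact not_le.mpr h
        · exact absurd h ht
      simp [this]
    simpa using h0
  have h2 : (∫ t in c..x, (if c ≤ t then A / t ^ (k + 2) else 0))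
      = A * ((x ^ (-(k + 1)) - c ^ (-(k + 1))) / (-(k + 1))) := by
    have hc0 : (0:ℝ) < c := by linarith
    have : (∫ t in c..x, (if c ≤ t then A / t ^ (k + 2) else 0))
        = ∫ t in c..x, A * t ^ (-(k + 2)) := by
      apply intervalIntegral.integral_congr
      intro t ht
      rw [Set.uIcc_of_le hcx] at ht
      have htc : c ≤ t := ht.1
      have ht0 : (0:ℝ) < t := lt_of_lt_of_le hc0 htc
      show (if c ≤ t then A / t ^ (k + 2) else 0) = A * t ^ (-(k + 2))
      rw [if_pos htc, Real.rpow_neg (le_of_lt ht0), div_eq_mul_inv]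
    rw [this, intervalIntegral.integral_const_mul, integral_rpow]
    · rw [show -(k + 2) + 1 = -(k + 1) by ring]
    · right
      constructor
      · intro h
        have : k = -1 := by linarith [neg_eq_iff_eq_neg.mp h]
        linarith
      · rw [Set.uIcc_of_le hcx]
        intro h
        have : (0:ℝ) < c := hc0
        linarith [h.1]
  rw [← hsplit, h1, h2, zero_add]

lemma key_identity {k : ℝ} (hk : -1 < k) {x : ℝ} (hx : 1 ≤ x) :
    ∫ t in (1:ℝ)..x, pik k t / t ^ (k + 2)
      = (1 / (k + 1)) * (Sfun x - x ^ (-(k + 1)) * pik k x) := by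
  have hx0 : (0:ℝ) ≤ x := by linarith
  have hk1 : (0:ℝ) < k + 1 := by linarith
  set P := Finset.filter Nat.Prime (Finset.range (⌊x⌋₊ + 1)) with hP
  -- pointwise rewriting of the integrand
  have hcongr : Set.EqOn (fun t => pik k t / t ^ (k + 2))
      (fun t => ∑ p ∈ P, (if (p : ℝ) ≤ t then (p : ℝ) ^ k / t ^ (k + 2) else 0))
      (Set.uIcc (1:ℝ) x) := by
    intro t ht
    rw [Set.uIcc_of_le hx] at ht
    have ht0 : (0:ℝ) ≤ t := by linarith [ht.1]
    have hPt : Finset.filter Nat.Prime (Finset.range (⌊t⌋₊ + 1))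
        = Finset.filter (fun p : ℕ => (p : ℝ) ≤ t) P := by
      ext p
      simp only [Finset.mem_filter, Finset.mem_range, Nat.lt_succ_iff,
        Nat.le_floor_iff ht0, Nat.le_floor_iff hx0, hP]
      constructor
      · rintro ⟨hpt, hp⟩
        exact ⟨⟨le_trans hpt ht.2, hp⟩, hpt⟩
      · rintro ⟨⟨_, hp⟩, hpt⟩
        exact ⟨hpt, hp⟩
    have hsum : pik k t = ∑ p ∈ P, (if (p : ℝ) ≤ t then (p : ℝ) ^ k else 0) := by
      rw [pik, hPt, Finset.sum_filter]
    simp only [hsum, Finset.sum_div]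
    apply Finset.sum_congr rfl
    intro p _
    split_ifs
    · rfl
    · exact zero_div _
  rw [intervalIntegral.integral_congr hcongr,
    intervalIntegral.integral_finset_sum (fun p _ => integrable_piece hx)]
  have hterm : ∀ p ∈ P, (∫ t in (1:ℝ)..x, (if (p : ℝ) ≤ t then (p : ℝ) ^ k / t ^ (k + 2) else 0))
      = (1 / (k + 1)) * (1 / (p : ℝ) - (p : ℝ) ^ k * x ^ (-(k + 1))) := by
    intro p hp
    rw [mem_P hx0] at hp
    have hp2 : (2 : ℝ) ≤ (p : ℝ) := by exact_mod_cast hp.1.two_le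
    have hp1 : (1 : ℝ) ≤ (p : ℝ) := by linarith
    have hp0 : (0 : ℝ) < (p : ℝ) := by linarith
    rw [integral_piece hk hp1 hp.2]
    have e1 : (p : ℝ) ^ k * (p : ℝ) ^ (-(k + 1)) = 1 / (p : ℝ) := by
      rw [← Real.rpow_add hp0, show k + -(k + 1) = -1 by ring, Real.rpow_neg_one, one_div]
    have hk1' : k + 1 ≠ 0 := by intro h; linarith
    have halg : ∀ A X C : ℝ, A * ((X - C) / (-(k + 1))) = 1 / (k + 1) * (A * C - A * X) := by
      intro A X C
      rw [div_neg, mul_neg]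
      field_simp [hk1']
      ring
    rw [← e1]
    exact halg _ _ _
  rw [Finset.sum_congr rfl hterm]
  have hS : Sfun x = ∑ p ∈ P, (1:ℝ) / p := rfl
  have hpik : pik k x = ∑ p ∈ P, (p : ℝ) ^ k := rfl
  rw [hS, hpik, Finset.mul_sum, ← Finset.sum_sub_distrib, Finset.mul_sum]
  apply Finset.sum_congr rfl
  intro p _
  ring

lemma g_bound {k : ℝ} (hk : -1 < k) {ε : ℝ} (hε0 : 0 < ε) (hε1 : ε < 1) {x : ℝ} (hx : 1 ≤ x) :
    x ^ (-(k + 1)) * pik k x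
      ≤ x ^ (-(ε * (k + 1))) * Sfun (x ^ (1 - ε)) + (Sfun x - Sfun (x ^ (1 - ε))) := by
  have hx0 : (0:ℝ) < x := by linarith
  have hk1 : (0:ℝ) < k + 1 := by linarith
  set y := x ^ (1 - ε) with hy
  have hy1 : (1:ℝ) ≤ y := Real.one_le_rpow hx (by linarith)
  have hyx : y ≤ x := by
    calc y ≤ x ^ (1:ℝ) := Real.rpow_le_rpow_of_exponent_le hx (by linarith)
    _ = x := Real.rpow_one x
  set P := Finset.filter Nat.Prime (Finset.range (⌊x⌋₊ + 1)) with hP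
  set Q := Finset.filter Nat.Prime (Finset.range (⌊y⌋₊ + 1)) with hQ
  have hQP : Q ⊆ P :=
    Finset.filter_subset_filter _ (Finset.range_subset_range.2 (by
      have := Nat.floor_mono hyx; omega))
  have hsdiff : (∑ p ∈ P \ Q, (1:ℝ) / p) + (∑ p ∈ Q, (1:ℝ) / p) = ∑ p ∈ P, (1:ℝ) / p :=
    Finset.sum_sdiff hQP
  have hpik : pik k x = ∑ p ∈ P, (p : ℝ) ^ k := rfl
  have hgx : x ^ (-(k + 1)) * pik k x = ∑ p ∈ P, x ^ (-(k + 1)) * (p : ℝ) ^ k := by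
    rw [hpik, Finset.mul_sum]
  rw [hgx, ← Finset.sum_sdiff hQP]
  have hQbound : ∑ p ∈ Q, x ^ (-(k + 1)) * (p : ℝ) ^ k
      ≤ x ^ (-(ε * (k + 1))) * Sfun y := by
    have hSy : Sfun y = ∑ p ∈ Q, (1:ℝ) / p := rfl
    rw [hSy, Finset.mul_sum]
    apply Finset.sum_le_sum
    intro p hp
    rw [mem_P (by linarith : (0:ℝ) ≤ y)] at hp
    have hp2 : (2 : ℝ) ≤ (p : ℝ) := by exact_mod_cast hp.1.two_le
    have hp0 : (0 : ℝ) < (p : ℝ) := by linarith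
    have e1 : (p : ℝ) ^ k = (p : ℝ) ^ (k + 1) * ((p:ℝ))⁻¹ := by
      rw [← Real.rpow_neg_one (p:ℝ), ← Real.rpow_add hp0,
        show k + 1 + (-1) = k by ring]
    have e2 : (p : ℝ) ^ (k + 1) ≤ y ^ (k + 1) :=
      Real.rpow_le_rpow (le_of_lt hp0) hp.2 (by linarith)
    have e3 : x ^ (-(k + 1)) * y ^ (k + 1) = x ^ (-(ε * (k + 1))) := by
      rw [hy, ← Real.rpow_mul (le_of_lt hx0), ← Real.rpow_add hx0,
        show -(k + 1) + (1 - ε) * (k + 1) = -(ε * (k + 1)) by ring]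
    calc x ^ (-(k + 1)) * (p : ℝ) ^ k
        = x ^ (-(k + 1)) * ((p : ℝ) ^ (k + 1) * ((p:ℝ))⁻¹) := by rw [← e1]
      _ ≤ x ^ (-(k + 1)) * (y ^ (k + 1) * ((p:ℝ))⁻¹) := by
          apply mul_le_mul_of_nonneg_left _ (Real.rpow_nonneg (le_of_lt hx0) _)
          exact mul_le_mul_of_nonneg_right e2 (by positivity)
      _ = x ^ (-(ε * (k + 1))) * (1 / (p:ℝ)) := by rw [← mul_assoc, e3, one_div]
  have hPQbound : ∑ p ∈ P \ Q, x ^ (-(k + 1)) * (p : ℝ) ^ k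
      ≤ ∑ p ∈ P \ Q, (1:ℝ) / p := by
    apply Finset.sum_le_sum
    intro p hp
    have hpP := Finset.sdiff_subset hp
    rw [mem_P (le_of_lt hx0)] at hpP
    have hp2 : (2 : ℝ) ≤ (p : ℝ) := by exact_mod_cast hpP.1.two_le
    have hp0 : (0 : ℝ) < (p : ℝ) := by linarith
    have e1 : (p : ℝ) ^ k = (p : ℝ) ^ (k + 1) * ((p:ℝ))⁻¹ := by
      rw [← Real.rpow_neg_one (p:ℝ), ← Real.rpow_add hp0,
        show k + 1 + (-1) = k by ring]
    have e2 : (p : ℝ) ^ (k + 1) ≤ x ^ (k + 1) :=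
      Real.rpow_le_rpow (le_of_lt hp0) hpP.2 (by linarith)
    have e3 : x ^ (-(k + 1)) * x ^ (k + 1) = 1 := by
      rw [← Real.rpow_add hx0, show -(k + 1) + (k + 1) = 0 by ring, Real.rpow_zero]
    calc x ^ (-(k + 1)) * (p : ℝ) ^ k
        = x ^ (-(k + 1)) * ((p : ℝ) ^ (k + 1) * ((p:ℝ))⁻¹) := by rw [← e1]
      _ ≤ x ^ (-(k + 1)) * (x ^ (k + 1) * ((p:ℝ))⁻¹) := by
          apply mul_le_mul_of_nonneg_left _ (Real.rpow_nonneg (le_of_lt hx0) _)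
          exact mul_le_mul_of_nonneg_right e2 (by positivity)
      _ = 1 / (p:ℝ) := by rw [← mul_assoc, e3, one_div, one_mul]
  have hPQ : ∑ p ∈ P \ Q, (1:ℝ) / p = Sfun x - Sfun y := by
    have hSx : Sfun x = ∑ p ∈ P, (1:ℝ) / p := rfl
    have hSy : Sfun y = ∑ p ∈ Q, (1:ℝ) / p := rfl
    rw [hSx, hSy]; linarith [hsdiff]
  linarith [hQbound, hPQbound, hPQ.le, hPQ.ge]

lemma tendsto_h {k B : ℝ} (hk : -1 < k)
    (hB : Tendsto (fun x : ℝ => Sfun x - Real.log (Real.log x)) atTop (nhds B))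
    {ε : ℝ} (hε0 : 0 < ε) (hε1 : ε < 1) :
    Tendsto (fun x : ℝ => x ^ (-(ε * (k + 1))) * Sfun (x ^ (1 - ε))
        + (Sfun x - Sfun (x ^ (1 - ε)))) atTop (nhds (-Real.log (1 - ε))) := by
  have hk1 : (0:ℝ) < k + 1 := by linarith
  have hD : (0:ℝ) < ε * (k + 1) := by positivity
  set D := ε * (k + 1) with hDdef
  have hyt : Tendsto (fun x : ℝ => x ^ (1 - ε)) atTop atTop :=
    tendsto_rpow_atTop (by linarith)
  have T1 : Tendsto (fun x : ℝ => Sfun (x ^ (1 - ε)) - Real.log (Real.log (x ^ (1 - ε))))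
      atTop (nhds B) := hB.comp hyt
  have T2 : Tendsto (fun x : ℝ => x ^ (-D)) atTop (nhds 0) := tendsto_rpow_neg_atTop hD
  -- eventually, log log (x^(1-ε)) = log (1-ε) + log log x
  have Tlog : ∀ᶠ x : ℝ in atTop, Real.log (Real.log (x ^ (1 - ε)))
      = Real.log (1 - ε) + Real.log (Real.log x) := by
    filter_upwards [eventually_gt_atTop 1] with x hx
    have hx0 : (0:ℝ) < x := by linarith
    have hlx : (0:ℝ) < Real.log x := Real.log_pos hx
    rw [Real.log_rpow hx0, Real.log_mul (by linarith) (ne_of_gt hlx)]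
  -- x^(-D) * log log x → 0
  have T3 : Tendsto (fun x : ℝ => x ^ (-D) * Real.log (Real.log x)) atTop (nhds 0) := by
    have hdiv : Tendsto (fun x : ℝ => Real.log x / x ^ D) atTop (nhds 0) :=
      (isLittleO_log_rpow_atTop hD).tendsto_div_nhds_zero
    have hdiv' : Tendsto (fun x : ℝ => x ^ (-D) * Real.log x) atTop (nhds 0) := by
      apply hdiv.congr'
      filter_upwards [eventually_gt_atTop 0] with x hx0
      rw [Real.rpow_neg (le_of_lt hx0), div_eq_mul_inv, mul_comm]
    apply squeeze_zero'
    · filter_upwards [eventually_ge_atTop 3] with x hx3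
      have hx0 : (0:ℝ) < x := by linarith
      have hlx : (1:ℝ) ≤ Real.log x := by
        rw [Real.le_log_iff_exp_le hx0]
        calc Real.exp 1 ≤ 2.7182818286 := le_of_lt Real.exp_one_lt_d9
          _ ≤ x := by linarith
      have : (0:ℝ) ≤ Real.log (Real.log x) := Real.log_nonneg hlx
      positivity
    · filter_upwards [eventually_ge_atTop 3] with x hx3
      have hx0 : (0:ℝ) < x := by linarith
      have hlx : (1:ℝ) ≤ Real.log x := by
        rw [Real.le_log_iff_exp_le hx0]
        calc Real.exp 1 ≤ 2.7182818286 := le_of_lt Real.exp_one_lt_d9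
          _ ≤ x := by linarith
      have h1 : Real.log (Real.log x) ≤ Real.log x := by
        apply Real.log_le_sub_one_of_pos (by linarith) |>.trans
        linarith
      exact mul_le_mul_of_nonneg_left h1 (Real.rpow_nonneg (le_of_lt hx0) _)
    · exact hdiv'
  -- assemble
  have Tmain : Tendsto (fun x : ℝ =>
      (x ^ (-D) * (Sfun (x ^ (1 - ε)) - Real.log (Real.log (x ^ (1 - ε))))
        + (x ^ (-D) * Real.log (1 - ε) + x ^ (-D) * Real.log (Real.log x)))
      + (((Sfun x - Real.log (Real.log x))
          - (Sfun (x ^ (1 - ε)) - Real.log (Real.log (x ^ (1 - ε)))))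
        + (-Real.log (1 - ε)))) atTop
      (nhds ((0 * B + (0 * Real.log (1 - ε) + 0)) + ((B - B) + -Real.log (1 - ε)))) := by
    exact (((T2.mul T1).add ((T2.mul_const _).add T3)).add
      (((hB.sub T1).add tendsto_const_nhds)))
  have Tmain' := Tmain
  rw [show (0 * B + (0 * Real.log (1 - ε) + 0)) + ((B - B) + -Real.log (1 - ε))
      = -Real.log (1 - ε) by ring] at Tmain'
  apply Tmain'.congr'
  filter_upwards [Tlog] with x hlog
  rw [hlog]
  ring

lemma tendsto_g {k B : ℝ} (hk : -1 < k)
    (hB : Tendsto (fun x : ℝ => Sfun x - Real.log (Real.log x)) atTop (nhds B)) :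
    Tendsto (fun x : ℝ => x ^ (-(k + 1)) * pik k x) atTop (nhds 0) := by
  rw [Metric.tendsto_nhds]
  intro δ hδ
  set ε := 1 - Real.exp (-(δ / 2)) with hεdef
  have hexp0 : (0:ℝ) < Real.exp (-(δ / 2)) := Real.exp_pos _
  have hexp1 : Real.exp (-(δ / 2)) < 1 := by
    rw [Real.exp_lt_one_iff]; linarith
  have hε0 : 0 < ε := by simp only [hεdef]; linarith
  have hε1 : ε < 1 := by simp only [hεdef]; linarith
  have hlogval : -Real.log (1 - ε) = δ / 2 := by
    rw [hεdef]
    simp [Real.log_exp]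
  have hlim := tendsto_h hk hB hε0 hε1
  rw [hlogval] at hlim
  have hev : ∀ᶠ x : ℝ in atTop,
      x ^ (-(ε * (k + 1))) * Sfun (x ^ (1 - ε)) + (Sfun x - Sfun (x ^ (1 - ε))) < δ :=
    hlim.eventually_lt_const (by linarith)
  filter_upwards [hev, eventually_ge_atTop 1] with x hhx hx1
  have hx0 : (0:ℝ) < x := by linarith
  have hg0 : 0 ≤ x ^ (-(k + 1)) * pik k x := by
    have := pik_nonneg k x
    positivity
  have hgb := g_bound hk hε0 hε1 hx1
  rw [Real.dist_eq, sub_zero, abs_of_nonneg hg0]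
  linarith

end Stmt19Aux

open Stmt19Aux in
theorem stmt19 (k : ℝ) (hk : -1 < k) (hk0 : k ≠ 0) (B : ℝ)
    (hB : Tendsto (fun x : ℝ =>
        (∑ p ∈ Finset.filter Nat.Prime (Finset.range (⌊x⌋₊ + 1)), (1 : ℝ) / p) -
          Real.log (Real.log x)) atTop (nhds B)) :
    Tendsto (fun x : ℝ =>
        (∫ t in (1:ℝ)..x, pik k t / t ^ (k + 2)) -
          (1 / (k + 1)) * Real.log (Real.log x))
      atTop (nhds (B / (k + 1))) := by
  have hB' : Tendsto (fun x : ℝ => Sfun x - Real.log (Real.log x)) atTop (nhds B) := hB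
  have hk1 : (0:ℝ) < k + 1 := by linarith
  have hg := tendsto_g hk hB'
  have hmain : Tendsto (fun x : ℝ =>
      (1 / (k + 1)) * ((Sfun x - Real.log (Real.log x)) - x ^ (-(k + 1)) * pik k x))
      atTop (nhds ((1 / (k + 1)) * (B - 0))) := (hB'.sub hg).const_mul _
  rw [show (1 / (k + 1)) * (B - 0) = B / (k + 1) by ring] at hmain
  apply hmain.congr'
  filter_upwards [eventually_ge_atTop 1] with x hx
  rw [key_identity hk hx]
  ring
end
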